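/- arXiv:2601.00272 — 2 statements merged into one kernel-verified Lean document; each statement's English description precedes it below -/
import Mathlib

section
/- Let c ≥ 1 and t > 0 be reals with c·t < 1. Then log(1 − t) / log(1 − c·t) ≤ 1/c. -/
open Real

/-- Bernoulli's inequality `1 - c t ≤ (1 - t) ^ c`, after taking logarithms. -/
theorem log_one_sub_mul_le_mul_log_one_sub {c t : ℝ} (hc : 1 ≤ c) (hct : c * t < 1) :
    log (1 - c * t) ≤ c * log (1 - t) := by
  have ht : t < 1 := by nlinarith
  have hbernoulli : 1 - c * t ≤ (1 - t) ^ c := by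
    simpa [sub_eq_add_neg, mul_comm] using one_add_mul_self_le_rpow_one_add (s := -t) (by linarith) hc
  calc log (1 - c * t) ≤ log ((1 - t) ^ c) := log_le_log (by linarith) hbernoulli
    _ = c * log (1 - t) := log_rpow (by linarith) c

/-- **The LSH exponent bound.**
For reals `c ≥ 1` and `t > 0` with `c·t < 1`, we have
`log(1 − t) / log(1 − c·t) ≤ 1/c`, where `log` is the natural logarithm. -/
theorem log_ratio_le_inv
    (c t : ℝ) (hc : 1 ≤ c) (ht : 0 < t) (hct : c * t < 1) :
    Real.log (1 - t) / Real.log (1 - c * t) ≤ 1 / c := by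
  have hc0 : 0 < c := by linarith
  have hlog_neg : log (1 - c * t) < 0 := log_neg (by linarith) (by nlinarith)
  rw [div_le_iff_of_neg hlog_neg, one_div_mul_eq_div, div_le_iff₀' hc0]
  exact log_one_sub_mul_le_mul_log_one_sub hc hct
end

section
/- There exist constants C > 0 and c_0 > e^e such that for every real c ≥ c_0, the quantity β(c) = min over positive integers k of max{ 1/(2·c^{1/k} − 1), 1/k } satisfies β(c) ≤ C · (ln ln c)/(ln c). -/
/-!
Take `k = ⌈L / (2 log L)⌉` annuli, where `L = log c`. Then `1/k ≤ 2 log L / L`, and since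
`2 log L ≤ L` also `k ≤ L / log L`, so `c^(1/k) = exp (L/k) ≥ exp (log L) = L` and the LSH term
`1/(2 c^(1/k) - 1)` is at most `1/L`. Both terms of the maximum are thus `O(log L / L)`.
-/

open Real

noncomputable def annuliExponent (c : ℝ) (k : ℕ) : ℝ :=
  max (1 / (2 * c ^ ((1 : ℝ) / (k : ℝ)) - 1)) (1 / (k : ℝ))

lemma annuliExponent_nonneg (c : ℝ) (k : ℕ) : 0 ≤ annuliExponent c k :=
  le_max_of_le_right (by positivity)

lemma iInf_annuliExponent_le (c : ℝ) {k : ℕ} (hk : 0 < k) :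
    ⨅ j : {j : ℕ // 0 < j}, annuliExponent c j ≤ annuliExponent c k :=
  ciInf_le (f := fun j : {j : ℕ // 0 < j} ↦ annuliExponent c j)
    ⟨0, by rintro _ ⟨j, rfl⟩; exact annuliExponent_nonneg c j⟩ ⟨k, hk⟩

lemma two_mul_log_le_self {x : ℝ} (hx : 0 < x) : 2 * log x ≤ x := by
  have hlog : exp 1 * log x ≤ x := by simpa [exp_log hx] using exp_one_mul_le_exp (x := log x)
  rcases le_or_gt 0 (log x) with hnonneg | hneg
  · nlinarith [exp_one_gt_two]
  · linarith

lemma exists_nat_log_le_div_and_one_div_le {L : ℝ} (hL : exp 1 ≤ L) :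
    ∃ k : ℕ, 0 < k ∧ log L ≤ L / k ∧ 1 / (k : ℝ) ≤ 2 * log L / L := by
  have hL0 : 0 < L := (exp_pos 1).trans_le hL
  have hM : 1 ≤ log L := (le_log_iff_exp_le hL0).mpr hL
  set x := L / (2 * log L) with hx
  have hx0 : 0 < x := by positivity
  have hx1 : 1 ≤ x := (one_le_div (by positivity)).mpr (two_mul_log_le_self hL0)
  have hkx : x ≤ ⌈x⌉₊ := Nat.le_ceil x
  have hk0 : (0 : ℝ) < ⌈x⌉₊ := hx0.trans_le hkx
  refine ⟨⌈x⌉₊, Nat.ceil_pos.mpr hx0, ?_, ?_⟩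
  · have hk_le : (⌈x⌉₊ : ℝ) ≤ 2 * x := by linarith [Nat.ceil_lt_add_one hx0.le]
    rw [le_div_iff₀ hk0]
    calc log L * ⌈x⌉₊ ≤ log L * (2 * x) := by gcongr
      _ = L := by rw [hx]; field_simp
  · calc 1 / (⌈x⌉₊ : ℝ) ≤ 1 / x := one_div_le_one_div_of_le hx0 hkx
      _ = 2 * log L / L := one_div_div _ _

lemma le_rpow_one_div_of_log_le {a c : ℝ} {k : ℕ} (ha : 0 < a) (hc : 0 < c)
    (h : log a ≤ log c / k) : a ≤ c ^ ((1 : ℝ) / (k : ℝ)) := by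
  rw [rpow_def_of_pos hc, ← exp_log ha, mul_one_div]
  exact exp_le_exp.mpr h

lemma one_div_two_mul_sub_one_le_one_div {a y : ℝ} (ha : 1 ≤ a) (hay : a ≤ y) :
    1 / (2 * y - 1) ≤ 1 / a :=
  one_div_le_one_div_of_le (by linarith) (by linarith)

lemma annuliExponent_le {c : ℝ} {k : ℕ} (hc0 : 0 < c) (hc : exp 1 ≤ log c)
    (hk : log (log c) ≤ log c / k) (hk' : 1 / (k : ℝ) ≤ 2 * log (log c) / log c) :
    annuliExponent c k ≤ 2 * log (log c) / log c := by
  set L := log c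
  have hL0 : 0 < L := (exp_pos 1).trans_le hc
  have hM : 1 ≤ log L := (le_log_iff_exp_le hL0).mpr hc
  refine max_le ?_ hk'
  calc 1 / (2 * c ^ ((1 : ℝ) / (k : ℝ)) - 1) ≤ 1 / L :=
        one_div_two_mul_sub_one_le_one_div (by linarith [add_one_le_exp (1 : ℝ)])
          (le_rpow_one_div_of_log_le hL0 hc0 hk)
    _ ≤ 2 * log L / L := by gcongr; linarith

/-- **Asymptotics of the concentric-annuli exponent for the Hamming cube.**
Let `β(c) = min_{k ≥ 1} max{1/(2·c^(1/k) − 1), 1/k}`. There are constants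
`C > 0` and `c₀ > e^e` such that `β(c) ≤ C·(ln ln c)/(ln c)` for all `c ≥ c₀`. -/
theorem beta_asymptotics :
    ∃ C > (0 : ℝ), ∃ c₀ > Real.exp (Real.exp 1), ∀ c : ℝ, c₀ ≤ c →
      (⨅ k : {k : ℕ // 0 < k},
          max (1 / (2 * c ^ ((1 : ℝ) / ((k : ℕ) : ℝ)) - 1)) (1 / ((k : ℕ) : ℝ)))
        ≤ C * Real.log (Real.log c) / Real.log c := by
  refine ⟨2, two_pos, exp (exp 2), exp_lt_exp.mpr (exp_lt_exp.mpr one_lt_two), ?_⟩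
  intro c hc
  have hc0 : 0 < c := (exp_pos _).trans_le hc
  have hlog : exp 1 ≤ log c :=
    (le_log_iff_exp_le hc0).mpr
      ((exp_le_exp.mpr (exp_le_exp.mpr one_le_two)).trans hc)
  obtain ⟨k, hk0, hk, hk'⟩ := exists_nat_log_le_div_and_one_div_le hlog
  calc ⨅ j : {j : ℕ // 0 < j}, annuliExponent c j ≤ annuliExponent c k :=
        iInf_annuliExponent_le c hk0
    _ ≤ 2 * log (log c) / log c := annuliExponent_le hc0 hlog hk hk'
end
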